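/- For every edge-weighted hypergraph H = (V,E,w) with |V| ≥ 2, γ₂ = ζ₂. -/

import Mathlib

open Finset

/-- An edge-weighted hypergraph on a finite vertex set `V`: a finite set of hyperedges,
each a nonempty subset of `V`, with positive weights. -/
structure WHypergraph (V : Type*) [Fintype V] [DecidableEq V] where
  E : Finset (Finset V)
  w : Finset V → ℝ
  edge_nonempty : ∀ e ∈ E, e.Nonempty
  w_pos : ∀ e ∈ E, 0 < w e

namespace WHypergraph

variable {V : Type*} [Fintype V] [DecidableEq V]

/-- The weight of a vertex: total weight of hyperedges containing it. -/
noncomputable def wv (H : WHypergraph V) (v : V) : ℝ :=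
  ∑ e ∈ H.E.filter (fun e => v ∈ e), H.w e

/-- The weight of a set of vertices. -/
noncomputable def wS (H : WHypergraph V) (S : Finset V) : ℝ := ∑ v ∈ S, H.wv v

/-- The boundary of `S`: hyperedges meeting both `S` and its complement. -/
noncomputable def bdry (H : WHypergraph V) (S : Finset V) : Finset (Finset V) :=
  H.E.filter (fun e => (e ∩ S).Nonempty ∧ (e \ S).Nonempty)

/-- The expansion `φ(S)` of a set of vertices. -/
noncomputable def phi (H : WHypergraph V) (S : Finset V) : ℝ :=
  (∑ e ∈ H.bdry S, H.w e) / H.wS S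

/-- `max_{u,v ∈ e} (f u - f v)^2`. -/
noncomputable def edgeDisc (H : WHypergraph V) (f : V → ℝ) (e : Finset V) : ℝ :=
  sSup {x : ℝ | ∃ u ∈ e, ∃ v ∈ e, (f u - f v) ^ 2 = x}

/-- The discrepancy ratio `D_w(f)`. -/
noncomputable def disc (H : WHypergraph V) (f : V → ℝ) : ℝ :=
  (∑ e ∈ H.E, H.w e * H.edgeDisc f e) / ∑ u : V, H.wv u * f u ^ 2

/-- The weighted inner product `⟨f,g⟩_w`. -/
noncomputable def wip (H : WHypergraph V) (f g : V → ℝ) : ℝ :=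
  ∑ u : V, H.wv u * f u * g u

/-- `γ₂`: infimum of the discrepancy ratio over nonzero `f ⊥_w 1`. -/
noncomputable def gamma2 (H : WHypergraph V) : ℝ :=
  sInf {x : ℝ | ∃ f : V → ℝ, f ≠ 0 ∧ H.wip f (fun _ => 1) = 0 ∧ H.disc f = x}

/-- The hypergraph expansion `φ_H`. -/
noncomputable def phiH (H : WHypergraph V) : ℝ :=
  sInf {x : ℝ | ∃ S : Finset V, S.Nonempty ∧ S ≠ univ ∧
    x = max (H.phi S) (H.phi Sᶜ)}

/-- `ζ_k`: inf over `k`-tuples of nonzero pairwise `w`-orthogonal vectors of the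
sup of the discrepancy ratio over nonzero vectors in their span. -/
noncomputable def zeta (H : WHypergraph V) (k : ℕ) : ℝ :=
  sInf {x : ℝ | ∃ f : Fin k → V → ℝ, (∀ i, f i ≠ 0) ∧
    (∀ i j, i ≠ j → H.wip (f i) (f j) = 0) ∧
    x = sSup {y : ℝ | ∃ h : V → ℝ, h ≠ 0 ∧
      h ∈ Submodule.span ℝ (Set.range f) ∧ H.disc h = y}}

/-- `ξ_k`: inf over `k`-tuples of nonzero pairwise `w`-orthogonal vectors of the
maximum discrepancy ratio among them. -/
noncomputable def xi (H : WHypergraph V) (k : ℕ) : ℝ :=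
  sInf {x : ℝ | ∃ f : Fin k → V → ℝ, (∀ i, f i ≠ 0) ∧
    (∀ i j, i ≠ j → H.wip (f i) (f j) = 0) ∧
    x = sSup {y : ℝ | ∃ i, H.disc (f i) = y}}

/-- A sequence of procedural minimizers: `f 0` is a nonzero constant vector, each `f i`
is nonzero and `w`-orthogonal to the previous ones, and attains the infimum of the
discrepancy ratio over nonzero vectors `w`-orthogonal to the previous ones. -/
def IsProcMin (H : WHypergraph V) {k : ℕ} (f : Fin k → V → ℝ) : Prop :=
  (∀ i, f i ≠ 0) ∧
  (∀ i : Fin k, (i : ℕ) = 0 → ∃ c : ℝ, f i = fun _ => c) ∧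
  (∀ i j : Fin k, (j : ℕ) < (i : ℕ) → H.wip (f i) (f j) = 0) ∧
  (∀ i : Fin k, 0 < (i : ℕ) → H.disc (f i) =
    sInf {x : ℝ | ∃ g : V → ℝ, g ≠ 0 ∧
      (∀ j : Fin k, (j : ℕ) < (i : ℕ) → H.wip g (f j) = 0) ∧ H.disc g = x})

end WHypergraph

/-! Two nonzero `w`-orthogonal vectors span a nonzero `h ⊥_w 1`, and the supremum of `D_w` over
their span is at least `D_w(h) ≥ γ₂`; hence `γ₂ ≤ ζ₂`. Conversely, for nonzero `g ⊥_w 1` the span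
of `1` and `g` consists of the vectors `a + b g`: the numerator of `D_w(a + b g)` is `b²` times
that of `D_w(g)`, while its denominator `a² w(V) + b² ⟨g, g⟩_w` (the cross term vanishes since
`g ⊥_w 1`) is at least `b²` times that of `D_w(g)`. So the supremum over this span is `D_w(g)`,
and `ζ₂ ≤ γ₂`. -/

namespace WHypergraph

variable {V : Type*} [Fintype V] [DecidableEq V] (H : WHypergraph V)

section EdgeDisc

variable (f : V → ℝ) {e : Finset V}

theorem edgeDisc_eq_sSup_image2 :
    H.edgeDisc f e = sSup (Set.image2 (fun u v => (f u - f v) ^ 2) (e : Set V) e) := rfl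

theorem exists_sq_sub_eq_edgeDisc (he : e.Nonempty) :
    ∃ u ∈ e, ∃ v ∈ e, (f u - f v) ^ 2 = H.edgeDisc f e :=
  (he.to_set.image2 he.to_set).csSup_mem (e.finite_toSet.image2 _ e.finite_toSet)

theorem edgeDisc_nonneg (he : e.Nonempty) : 0 ≤ H.edgeDisc f e := by
  obtain ⟨u, hu, v, hv, huv⟩ := H.exists_sq_sub_eq_edgeDisc f he
  exact huv ▸ sq_nonneg _

theorem edgeDisc_affine (a b : ℝ) (e : Finset V) :
    H.edgeDisc (fun u => a + b * f u) e = b ^ 2 * H.edgeDisc f e := by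
  rw [edgeDisc_eq_sSup_image2, edgeDisc_eq_sSup_image2, ← smul_eq_mul,
    ← Real.sSup_smul_of_nonneg (sq_nonneg b), ← Set.image_smul, Set.image_image2]
  congr 1
  ext x
  simp only [Set.mem_image2, smul_eq_mul]
  ring_nf

end EdgeDisc

theorem wv_nonneg (v : V) : 0 ≤ H.wv v :=
  sum_nonneg fun e he => (H.w_pos e (mem_filter.1 he).1).le

theorem w_le_wv {e : Finset V} (he : e ∈ H.E) {v : V} (hv : v ∈ e) : H.w e ≤ H.wv v :=
  single_le_sum (fun e' he' => (H.w_pos e' (mem_filter.1 he').1).le) (mem_filter.2 ⟨he, hv⟩)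

theorem wip_comm (f g : V → ℝ) : H.wip f g = H.wip g f :=
  sum_congr rfl fun _ _ => by ring

theorem wip_smul_left (c : ℝ) (f g : V → ℝ) : H.wip (c • f) g = c * H.wip f g := by
  simp only [wip, mul_sum, Pi.smul_apply, smul_eq_mul]
  exact sum_congr rfl fun _ _ => by ring

theorem wip_sub_left (f₁ f₂ g : V → ℝ) : H.wip (f₁ - f₂) g = H.wip f₁ g - H.wip f₂ g := by
  simp only [wip, ← sum_sub_distrib, Pi.sub_apply]
  exact sum_congr rfl fun _ _ => by ring

theorem wip_self_eq_sum_sq (f : V → ℝ) : H.wip f f = ∑ u, H.wv u * f u ^ 2 :=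
  sum_congr rfl fun _ _ => by ring

theorem wip_self_nonneg (f : V → ℝ) : 0 ≤ H.wip f f := by
  rw [wip_self_eq_sum_sq]
  exact sum_nonneg fun u _ => mul_nonneg (H.wv_nonneg u) (sq_nonneg _)

theorem wip_self_pos (hw : ∀ v, 0 < H.wv v) {f : V → ℝ} (hf : f ≠ 0) : 0 < H.wip f f := by
  obtain ⟨u, hu⟩ := Function.ne_iff.1 hf
  rw [wip_self_eq_sum_sq]
  exact sum_pos' (fun v _ => mul_nonneg (H.wv_nonneg v) (sq_nonneg _))
    ⟨u, mem_univ u, mul_pos (hw u) (sq_pos_of_ne_zero hu)⟩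

theorem wip_affine_self {f : V → ℝ} (hf : H.wip f (fun _ => 1) = 0) (a b : ℝ) :
    H.wip (fun u => a + b * f u) (fun u => a + b * f u) =
      a ^ 2 * H.wip (fun _ => 1) (fun _ => 1) + b ^ 2 * H.wip f f := by
  have hexp : ∀ u, H.wv u * (a + b * f u) * (a + b * f u) = a ^ 2 * (H.wv u * 1 * 1) +
      2 * a * b * (H.wv u * f u * 1) + b ^ 2 * (H.wv u * f u * f u) := fun u => by ring
  rw [wip] at hf
  simp only [wip, hexp, sum_add_distrib, ← mul_sum, hf]
  ring

theorem exists_mem_span_pair_wip_eq_zero (hw : ∀ v, 0 < H.wv v) {f₀ f₁ : V → ℝ}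
    (h₀ : f₀ ≠ 0) (h₁ : f₁ ≠ 0) (h₁₀ : H.wip f₁ f₀ = 0) (c : V → ℝ) :
    ∃ h ≠ 0, h ∈ Submodule.span ℝ {f₀, f₁} ∧ H.wip h c = 0 := by
  by_cases hb : H.wip f₁ c = 0
  · exact ⟨f₁, h₁, Submodule.subset_span (by simp), hb⟩
  refine ⟨H.wip f₁ c • f₀ - H.wip f₀ c • f₁, fun h0 => ?_, ?_, ?_⟩
  · have := congrArg (H.wip · f₀) h0
    simp only [wip_sub_left, wip_smul_left, h₁₀, mul_zero, sub_zero] at this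
    rw [show H.wip 0 f₀ = 0 from sum_eq_zero fun _ _ => by simp] at this
    exact mul_ne_zero hb (H.wip_self_pos hw h₀).ne' this
  · exact Submodule.sub_mem _ (Submodule.smul_mem _ _ (Submodule.subset_span (by simp)))
      (Submodule.smul_mem _ _ (Submodule.subset_span (by simp)))
  · rw [wip_sub_left, wip_smul_left, wip_smul_left, mul_comm, sub_self]

noncomputable def energy (f : V → ℝ) : ℝ := ∑ e ∈ H.E, H.w e * H.edgeDisc f e

theorem disc_eq_energy_div_wip (f : V → ℝ) : H.disc f = H.energy f / H.wip f f := by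
  rw [disc, wip_self_eq_sum_sq, energy]

theorem energy_nonneg (f : V → ℝ) : 0 ≤ H.energy f :=
  sum_nonneg fun e he => mul_nonneg (H.w_pos e he).le (H.edgeDisc_nonneg f (H.edge_nonempty e he))

theorem energy_affine (f : V → ℝ) (a b : ℝ) :
    H.energy (fun u => a + b * f u) = b ^ 2 * H.energy f := by
  simp only [energy, edgeDisc_affine, mul_sum]
  exact sum_congr rfl fun _ _ => by ring

theorem w_mul_edgeDisc_le (f : V → ℝ) {e : Finset V} (he : e ∈ H.E) :
    H.w e * H.edgeDisc f e ≤ 4 * H.wip f f := by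
  obtain ⟨u, hu, v, hv, huv⟩ := H.exists_sq_sub_eq_edgeDisc f (H.edge_nonempty e he)
  have term_le : ∀ x ∈ e, H.w e * f x ^ 2 ≤ H.wip f f := fun x hx => by
    rw [wip_self_eq_sum_sq]
    exact (mul_le_mul_of_nonneg_right (H.w_le_wv he hx) (sq_nonneg _)).trans
      (single_le_sum (fun y _ => mul_nonneg (H.wv_nonneg y) (sq_nonneg (f y))) (mem_univ x))
  -- `(x - y)² ≤ 2x² + 2y²`
  rw [← huv]
  nlinarith [term_le u hu, term_le v hv, H.w_pos e he, sq_nonneg (f u + f v)]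

theorem energy_le (f : V → ℝ) : H.energy f ≤ 4 * #H.E * H.wip f f := by
  calc H.energy f ≤ ∑ _e ∈ H.E, 4 * H.wip f f := sum_le_sum fun e he => H.w_mul_edgeDisc_le f he
    _ = 4 * #H.E * H.wip f f := by rw [sum_const, nsmul_eq_mul]; ring

theorem disc_nonneg (f : V → ℝ) : 0 ≤ H.disc f := by
  rw [disc_eq_energy_div_wip]
  exact div_nonneg (H.energy_nonneg f) (H.wip_self_nonneg f)

theorem disc_le (f : V → ℝ) : H.disc f ≤ 4 * #H.E := by
  rw [disc_eq_energy_div_wip]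
  exact div_le_of_le_mul₀ (H.wip_self_nonneg f) (by positivity) (H.energy_le f)

theorem disc_affine_le (hw : ∀ v, 0 < H.wv v) {f : V → ℝ} (hf : f ≠ 0)
    (hf1 : H.wip f (fun _ => 1) = 0) (a b : ℝ) : H.disc (fun u => a + b * f u) ≤ H.disc f := by
  rw [disc_eq_energy_div_wip, disc_eq_energy_div_wip, energy_affine, H.wip_affine_self hf1]
  rcases eq_or_ne b 0 with rfl | hb
  · simpa [← disc_eq_energy_div_wip] using H.disc_nonneg f
  have hb2 : 0 < b ^ 2 := by positivity
  calc b ^ 2 * H.energy f / (a ^ 2 * H.wip (fun _ => 1) (fun _ => 1) + b ^ 2 * H.wip f f)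
      ≤ b ^ 2 * H.energy f / (b ^ 2 * H.wip f f) :=
        div_le_div_of_nonneg_left (mul_nonneg hb2.le (H.energy_nonneg f))
          (mul_pos hb2 (H.wip_self_pos hw hf))
          (le_add_of_nonneg_left (mul_nonneg (sq_nonneg a) (H.wip_self_nonneg _)))
    _ = H.energy f / H.wip f f := mul_div_mul_left _ _ hb2.ne'

noncomputable def maxDiscOnSpan {ι : Type*} (f : ι → V → ℝ) : ℝ :=
  sSup {y : ℝ | ∃ h : V → ℝ, h ≠ 0 ∧ h ∈ Submodule.span ℝ (Set.range f) ∧ H.disc h = y}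

theorem disc_le_maxDiscOnSpan {ι : Type*} (f : ι → V → ℝ) {h : V → ℝ} (hh : h ≠ 0)
    (hspan : h ∈ Submodule.span ℝ (Set.range f)) : H.disc h ≤ H.maxDiscOnSpan f :=
  le_csSup ⟨4 * #H.E, by rintro _ ⟨g, -, -, rfl⟩; exact H.disc_le g⟩ ⟨h, hh, hspan, rfl⟩

theorem maxDiscOnSpan_one_pair_le (hw : ∀ v, 0 < H.wv v) {g : V → ℝ} (hg : g ≠ 0)
    (hg1 : H.wip g (fun _ => 1) = 0) : H.maxDiscOnSpan ![fun _ => 1, g] ≤ H.disc g := by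
  refine Real.sSup_le ?_ (H.disc_nonneg g)
  rintro _ ⟨h, -, hspan, rfl⟩
  rw [Matrix.range_cons_cons_empty] at hspan
  obtain ⟨a, b, rfl⟩ := Submodule.mem_span_pair.1 hspan
  convert H.disc_affine_le hw hg hg1 a b using 2
  ext u
  simp

end WHypergraph

theorem gamma2_eq_zeta2_general {V : Type*} [Fintype V] [DecidableEq V]
    (H : WHypergraph V) (hw : ∀ v : V, 0 < H.wv v) :
    H.gamma2 = H.zeta 2 := by
  refine csInf_eq_csInf_of_forall_exists_le ?_ ?_
  · rintro _ ⟨g, hg, hg1, rfl⟩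
    have hone : (fun _ : V => (1 : ℝ)) ≠ 0 := by
      obtain ⟨u, -⟩ := Function.ne_iff.1 hg
      exact Function.ne_iff.2 ⟨u, one_ne_zero⟩
    refine ⟨_, ⟨![fun _ => 1, g], Fin.forall_fin_two.2 ⟨hone, hg⟩, ?_, rfl⟩,
      H.maxDiscOnSpan_one_pair_le hw hg hg1⟩
    intro i j hij
    fin_cases i <;> fin_cases j <;> simp_all [H.wip_comm (fun _ => 1) g]
  · rintro _ ⟨f, hf, horth, rfl⟩
    obtain ⟨h, hh, hspan, hh1⟩ := H.exists_mem_span_pair_wip_eq_zero hw (hf 0) (hf 1)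
      (horth 1 0 (by decide)) (fun _ => 1)
    refine ⟨_, ⟨h, hh, hh1, rfl⟩, H.disc_le_maxDiscOnSpan f hh (Submodule.span_mono ?_ hspan)⟩
    exact Set.insert_subset_iff.2 ⟨⟨0, rfl⟩, Set.singleton_subset_iff.2 ⟨1, rfl⟩⟩

/-- `γ₂ = ζ₂` for every edge-weighted hypergraph with at least two vertices. -/
theorem gamma2_eq_zeta2 {V : Type*} [Fintype V] [DecidableEq V]
    (H : WHypergraph V) (hV : 2 ≤ Fintype.card V) (hw : ∀ v : V, 0 < H.wv v) :
    H.gamma2 = H.zeta 2 :=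
  gamma2_eq_zeta2_general H hw
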